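/- Fix β with 0 < m₁ ≤ β ≤ m₂ and define F(ξ) = ξ/(1 - β|ξ|) for ξ ∈ ℝ^{2×2} with |ξ| < 1/m₂. Then for any such ξ₁, ξ₂, one has (F(ξ₁) - F(ξ₂)) · (ξ₁ - ξ₂) ≥ |ξ₁ - ξ₂|², i.e. F is strongly monotone with constant 1. -/

import Mathlib

open scoped RealInnerProductSpace

abbrev Mat (d : ℕ) := EuclideanSpace ℝ (Fin d × Fin d)

/-- Strong monotonicity of `F(ξ) = ξ/(1 - β‖ξ‖)` with constant 1. -/
theorem F_strongly_monotone (m₁ m₂ β : ℝ) (hm₁ : 0 < m₁) (h₁ : m₁ ≤ β) (h₂ : β ≤ m₂)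
    (F : Mat 2 → Mat 2) (hF : ∀ ξ : Mat 2, F ξ = (1 - β * ‖ξ‖)⁻¹ • ξ)
    (ξ₁ ξ₂ : Mat 2) (hξ₁ : ‖ξ₁‖ < 1 / m₂) (hξ₂ : ‖ξ₂‖ < 1 / m₂) :
    ⟪F ξ₁ - F ξ₂, ξ₁ - ξ₂⟫ ≥ ‖ξ₁ - ξ₂‖ ^ 2 := by
  have hβ : 0 < β := lt_of_lt_of_le hm₁ h₁
  have hm₂ : 0 < m₂ := lt_of_lt_of_le hβ h₂
  set t₁ := ‖ξ₁‖ with ht₁def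
  set t₂ := ‖ξ₂‖ with ht₂def
  have ht₁0 : 0 ≤ t₁ := norm_nonneg _
  have ht₂0 : 0 ≤ t₂ := norm_nonneg _
  have hb₁ : β * t₁ < 1 := by
    have h' : m₂ * t₁ < 1 := by
      rcases eq_or_lt_of_le ht₁0 with h | h
      · rw [← h]; norm_num
      · calc m₂ * t₁ < m₂ * (1 / m₂) := (mul_lt_mul_iff_right₀ hm₂).2 hξ₁
          _ = 1 := by field_simp
    nlinarith
  have hb₂ : β * t₂ < 1 := by
    have h' : m₂ * t₂ < 1 := by
      rcases eq_or_lt_of_le ht₂0 with h | h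
      · rw [← h]; norm_num
      · calc m₂ * t₂ < m₂ * (1 / m₂) := (mul_lt_mul_iff_right₀ hm₂).2 hξ₂
          _ = 1 := by field_simp
    nlinarith
  have hc₁ : (0:ℝ) < 1 - β * t₁ := by linarith
  have hc₂ : (0:ℝ) < 1 - β * t₂ := by linarith
  have hst : ⟪ξ₁, ξ₂⟫ ≤ t₁ * t₂ := real_inner_le_norm ξ₁ ξ₂
  set a := (1 - β * t₁)⁻¹ with hadef
  set b := (1 - β * t₂)⁻¹ with hbdef
  have ha : 0 < a := inv_pos.2 hc₁
  have hb : 0 < b := inv_pos.2 hc₂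
  have hexp : ⟪F ξ₁ - F ξ₂, ξ₁ - ξ₂⟫ =
      a * t₁ ^ 2 + b * t₂ ^ 2 - (a + b) * ⟪ξ₁, ξ₂⟫ := by
    rw [hF, hF]
    simp only [inner_sub_left, inner_sub_right, real_inner_smul_left,
      real_inner_self_eq_norm_sq, real_inner_comm ξ₂ ξ₁]
    ring
  have hnorm : ‖ξ₁ - ξ₂‖ ^ 2 = t₁ ^ 2 + t₂ ^ 2 - 2 * ⟪ξ₁, ξ₂⟫ := by
    rw [← real_inner_self_eq_norm_sq]
    simp only [inner_sub_left, inner_sub_right, real_inner_self_eq_norm_sq,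
      real_inner_comm ξ₂ ξ₁]
    ring
  rw [hexp, hnorm]
  set s := ⟪ξ₁, ξ₂⟫ with hsdef
  have e₁ : a = 1 + β * t₁ * a := by rw [hadef]; field_simp; ring
  have e₂ : b = 1 + β * t₂ * b := by rw [hbdef]; field_simp; ring
  have key : 0 ≤ β * (t₁ - t₂) * (a * t₁ ^ 2 - b * t₂ ^ 2) := by
    have hid : a * t₁ ^ 2 - b * t₂ ^ 2 = a * b * ((t₁ - t₂) * (t₁ * (1 - β * t₂) + t₂)) := by
      rw [hadef, hbdef]; field_simp; ring
    rw [hid]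
    have : β * (t₁ - t₂) * (a * b * ((t₁ - t₂) * (t₁ * (1 - β * t₂) + t₂)))
        = β * (a * b) * (t₁ - t₂) ^ 2 * (t₁ * (1 - β * t₂) + t₂) := by ring
    rw [this]
    have hx : 0 ≤ t₁ * (1 - β * t₂) + t₂ := by positivity
    positivity
  have hc : 0 ≤ β * t₁ * a + β * t₂ * b := by positivity
  have hmul : (β * t₁ * a + β * t₂ * b) * s ≤ (β * t₁ * a + β * t₂ * b) * (t₁ * t₂) :=
    mul_le_mul_of_nonneg_left hst hc
  nlinarith [key, hmul, e₁, e₂]
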